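/- For a fixed integer K with 1 ≤ K < C, the adaptive gain Δ_K = ℰ(S_K^*) − ℰ(𝒮_K^*) is zero if and only if there exists λ ∈ [0,1] such that η̃_K(X) ≥ λ ≥ η̃_{K+1}(X) holds μ-almost everywhere. -/

import Mathlib

open MeasureTheory Finset

/-- Error rate of a set-valued classifier: `ℰ(S) = ∫ (1 − ∑_{k∈S(x)} η_k(x)) dμ(x)`. -/
noncomputable def errRate {𝒳 : Type*} [MeasurableSpace 𝒳] (μ : Measure 𝒳) {C : ℕ}
    (η : 𝒳 → Fin C → ℝ) (S : 𝒳 → Finset (Fin C)) : ℝ :=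
  ∫ x, (1 - ∑ k ∈ S x, η x k) ∂μ

/-- Average set size of a set-valued classifier: `ℐ(S) = ∫ |S(x)| dμ(x)`. -/
noncomputable def avgSize {𝒳 : Type*} [MeasurableSpace 𝒳] (μ : Measure 𝒳) {C : ℕ}
    (S : 𝒳 → Finset (Fin C)) : ℝ :=
  ∫ x, ((S x).card : ℝ) ∂μ

/-- `G_η(λ) = ∑_{k=1}^C μ{x : η_k(x) > λ}`. -/
noncomputable def Gfun {𝒳 : Type*} [MeasurableSpace 𝒳] (μ : Measure 𝒳) {C : ℕ}
    (η : 𝒳 → Fin C → ℝ) (lam : ℝ) : ℝ :=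
  ∑ k : Fin C, (μ {x | lam < η x k}).toReal

/-- `λ_𝒦 = min {λ ∈ [0,1] : G_η(λ) ≤ 𝒦}` (as an infimum). -/
noncomputable def lamThresh {𝒳 : Type*} [MeasurableSpace 𝒳] (μ : Measure 𝒳) {C : ℕ}
    (η : 𝒳 → Fin C → ℝ) (K : ℝ) : ℝ :=
  sInf {lam : ℝ | lam ∈ Set.Icc (0 : ℝ) 1 ∧ Gfun μ η lam ≤ K}

/-- `𝒮_𝒦^+(x) = {k : η_k(x) > λ_𝒦}`. -/
noncomputable def Splus {𝒳 : Type*} [MeasurableSpace 𝒳] (μ : Measure 𝒳) {C : ℕ}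
    (η : 𝒳 → Fin C → ℝ) (K : ℝ) : 𝒳 → Finset (Fin C) :=
  fun x => Finset.univ.filter (fun k => lamThresh μ η K < η x k)

section Aux

lemma aux_card_perm {C : ℕ} {f g : Fin C → ℝ} (σ : Equiv.Perm (Fin C))
    (hfg : ∀ k, g k = f (σ k)) (p : ℝ → Prop) [DecidablePred p] :
    (univ.filter fun k => p (f k)).card = (univ.filter fun q => p (g q)).card := by
  apply Finset.card_bij' (fun k _ => σ.symm k) (fun q _ => σ q)
  · intro k hk; simp only [mem_filter, mem_univ, true_and] at hk ⊢
    rwa [hfg, Equiv.apply_symm_apply]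
  · intro q hq; simp only [mem_filter, mem_univ, true_and] at hq ⊢
    rwa [← hfg]
  · intro k _; simp
  · intro q _; simp

lemma aux_card_gt {C : ℕ} {f g : Fin C → ℝ} (σ : Equiv.Perm (Fin C))
    (hfg : ∀ k, g k = f (σ k)) (hsort : ∀ i j : Fin C, i ≤ j → g j ≤ g i) (i : Fin C) :
    (univ.filter fun k => g i < f k).card ≤ (i : ℕ) := by
  rw [aux_card_perm σ hfg (fun r => g i < r)]
  have hsub : (univ.filter fun q => g i < g q) ⊆ (univ.filter fun q : Fin C => q < i) := by
    intro q hq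
    simp only [mem_filter, mem_univ, true_and] at hq ⊢
    by_contra h
    exact absurd hq (not_lt.2 (hsort i q (not_lt.1 h)))
  have hcard : (univ.filter fun q : Fin C => q < i).card = (i : ℕ) := by
    have : (univ.filter fun q : Fin C => q < i) = Finset.Iio i := by ext q; simp
    rw [this, Fin.card_Iio]
  exact hcard ▸ Finset.card_le_card hsub

lemma aux_card_ge {C : ℕ} {f g : Fin C → ℝ} (σ : Equiv.Perm (Fin C))
    (hfg : ∀ k, g k = f (σ k)) (hsort : ∀ i j : Fin C, i ≤ j → g j ≤ g i) (i : Fin C) :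
    (i : ℕ) + 1 ≤ (univ.filter fun k => g i ≤ f k).card := by
  rw [aux_card_perm σ hfg (fun r => g i ≤ r)]
  have hsub : (univ.filter fun q : Fin C => q ≤ i) ⊆ (univ.filter fun q => g i ≤ g q) := by
    intro q hq
    simp only [mem_filter, mem_univ, true_and] at hq ⊢
    exact hsort q i hq
  have hcard : (univ.filter fun q : Fin C => q ≤ i).card = (i : ℕ) + 1 := by
    have : (univ.filter fun q : Fin C => q ≤ i) = Finset.Iic i := by ext q; simp
    rw [this, Fin.card_Iic]
  exact hcard ▸ Finset.card_le_card hsub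

lemma aux_sum_indicator {𝒳 : Type*} {C : ℕ} (f : 𝒳 → Fin C → ℝ) (S : 𝒳 → Finset (Fin C))
    (x : 𝒳) :
    ∑ k ∈ S x, f x k = ∑ k : Fin C, ({y | k ∈ S y}).indicator (fun y => f y k) x := by
  simp only [Set.indicator_apply, Set.mem_setOf_eq]
  rw [Finset.sum_ite_mem, Finset.univ_inter]

lemma aux_integrable_sum {𝒳 : Type*} [MeasurableSpace 𝒳] (μ : Measure 𝒳) {C : ℕ}
    (f : 𝒳 → Fin C → ℝ) (S : 𝒳 → Finset (Fin C))
    (hm : ∀ k, MeasurableSet {x | k ∈ S x}) (hint : ∀ k, Integrable (fun x => f x k) μ) :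
    Integrable (fun x => ∑ k ∈ S x, f x k) μ := by
  simp_rw [aux_sum_indicator f S]
  exact integrable_finset_sum _ (fun k _ => (hint k).indicator (hm k))

lemma aux_card_sum {𝒳 : Type*} {C : ℕ} (S : 𝒳 → Finset (Fin C)) (x : 𝒳) :
    ((S x).card : ℝ) = ∑ k ∈ S x, (1:ℝ) := by simp

lemma aux_integrable_card {𝒳 : Type*} [MeasurableSpace 𝒳] (μ : Measure 𝒳) [IsFiniteMeasure μ]
    {C : ℕ} (S : 𝒳 → Finset (Fin C)) (hm : ∀ k, MeasurableSet {x | k ∈ S x}) :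
    Integrable (fun x => ((S x).card : ℝ)) μ := by
  simp_rw [aux_card_sum S]
  exact aux_integrable_sum μ _ S hm (fun k => integrable_const 1)

lemma aux_integral_card {𝒳 : Type*} [MeasurableSpace 𝒳] (μ : Measure 𝒳) [IsFiniteMeasure μ]
    {C : ℕ} (S : 𝒳 → Finset (Fin C)) (hm : ∀ k, MeasurableSet {x | k ∈ S x}) :
    ∫ x, ((S x).card : ℝ) ∂μ = ∑ k : Fin C, (μ {x | k ∈ S x}).toReal := by
  simp_rw [aux_card_sum S, aux_sum_indicator (fun _ _ => (1:ℝ)) S]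
  rw [integral_finset_sum _ (fun k _ => (integrable_const (1:ℝ)).indicator (hm k))]
  refine Finset.sum_congr rfl fun k _ => ?_
  rw [integral_indicator_const (1:ℝ) (hm k), smul_eq_mul, mul_one]
  rfl

end Aux

/-- for `1 ≤ K < C`, the adaptive gain `Δ_K = ℰ(S_K^*) − ℰ(𝒮_K^*)` is zero
iff there exists `λ ∈ [0,1]` with `η̃_K(X) ≥ λ ≥ η̃_{K+1}(X)` μ-almost everywhere. -/
theorem stmt_5 {𝒳 : Type*} [MeasurableSpace 𝒳] (μ : Measure 𝒳) [IsProbabilityMeasure μ]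
    {C : ℕ} (η : 𝒳 → Fin C → ℝ)
    (hη : ∀ k, Measurable fun x => η x k)
    (hη0 : ∀ x k, 0 ≤ η x k) (hη1 : ∀ x, ∑ k, η x k = 1)
    (K : ℕ) (hK1 : 1 ≤ K) (hKC : K < C)
    -- the decreasing rearrangement of the conditional probabilities
    (ηs : 𝒳 → Fin C → ℝ)
    (hηs : ∀ x, ∃ σ : Equiv.Perm (Fin C), (∀ k, ηs x k = η x (σ k)) ∧
      ∀ i j : Fin C, i ≤ j → ηs x j ≤ ηs x i)
    -- the optimal top-K classifier
    (StopK : 𝒳 → Finset (Fin C))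
    (hS_meas : ∀ k, MeasurableSet {x | k ∈ StopK x})
    (hS_card : ∀ x, (StopK x).card = K)
    (hS_top : ∀ x, ∀ k ∈ StopK x, ∀ j, j ∉ StopK x → η x j ≤ η x k)
    -- the tie-breaking part of the optimal average-K classifier, assumed to exist
    (T : 𝒳 → Finset (Fin C))
    (hT_meas : ∀ k, MeasurableSet {x | k ∈ T x})
    (hT_tie : ∀ x, ∀ k ∈ T x, η x k = lamThresh μ η (K : ℝ))
    (hT_size : avgSize μ T = (K : ℝ) - avgSize μ (Splus μ η (K : ℝ))) :
    errRate μ η StopK - errRate μ η (fun x => Splus μ η (K : ℝ) x ∪ T x) = 0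
      ↔ ∃ lam ∈ Set.Icc (0 : ℝ) 1,
          ∀ᵐ x ∂μ, ηs x ⟨K, hKC⟩ ≤ lam ∧ lam ≤ ηs x ⟨K - 1, by omega⟩ := by
  classical
  set lam := lamThresh μ η (K : ℝ) with hlam_def
  have hSPmem : ∀ (x : 𝒳) (k : Fin C), k ∈ Splus μ η (K : ℝ) x ↔ lam < η x k := by
    intro x k; simp [Splus, hlam_def]
  -- η is bounded by 1
  have hle1 : ∀ x k, η x k ≤ 1 := by
    intro x k
    calc η x k ≤ ∑ j, η x j := Finset.single_le_sum (fun j _ => hη0 x j) (mem_univ k)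
    _ = 1 := hη1 x
  -- lam ∈ [0,1]
  have hmemA1 : (1:ℝ) ∈ {l : ℝ | l ∈ Set.Icc (0:ℝ) 1 ∧ Gfun μ η l ≤ (K:ℝ)} := by
    refine ⟨⟨zero_le_one, le_refl 1⟩, ?_⟩
    have hz : Gfun μ η 1 = 0 := by
      unfold Gfun
      refine Finset.sum_eq_zero fun k _ => ?_
      have he : {x | (1:ℝ) < η x k} = ∅ := by
        ext x; simp [not_lt.2 (hle1 x k)]
      simp [he]
    rw [hz]; positivity
  have hbdd : BddBelow {l : ℝ | l ∈ Set.Icc (0:ℝ) 1 ∧ Gfun μ η l ≤ (K:ℝ)} :=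
    ⟨0, fun l hl => hl.1.1⟩
  have hlam0 : 0 ≤ lam := le_csInf ⟨1, hmemA1⟩ (fun l hl => hl.1.1)
  have hlam1 : lam ≤ 1 := csInf_le hbdd hmemA1
  -- measurability of filter sets
  have hfilt_meas : ∀ (l : ℝ) (k : Fin C),
      MeasurableSet {x : 𝒳 | k ∈ univ.filter (fun j => l < η x j)} := by
    intro l k
    have he : {x : 𝒳 | k ∈ univ.filter (fun j => l < η x j)} = {x | l < η x k} := by
      ext x; simp
    rw [he]
    exact measurableSet_lt measurable_const (hη k)
  have hSP_meas : ∀ k, MeasurableSet {x : 𝒳 | k ∈ Splus μ η (K:ℝ) x} := fun k => hfilt_meas lam k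
  -- integrability
  have h_int_eta : ∀ k, Integrable (fun x => η x k) μ := by
    intro k
    refine (integrable_const (1:ℝ)).mono' (hη k).aestronglyMeasurable ?_
    refine ae_of_all _ fun x => ?_
    rw [Real.norm_eq_abs, abs_of_nonneg (hη0 x k)]
    exact hle1 x k
  have h_int_etal : ∀ k, Integrable (fun x => η x k - lam) μ :=
    fun k => (h_int_eta k).sub (integrable_const lam)
  have h_int_sumS : Integrable (fun x => ∑ k ∈ StopK x, η x k) μ :=
    aux_integrable_sum μ _ StopK hS_meas h_int_eta
  have h_int_sumSP : Integrable (fun x => ∑ k ∈ Splus μ η (K:ℝ) x, η x k) μ :=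
    aux_integrable_sum μ _ _ hSP_meas h_int_eta
  have h_int_cardSP : Integrable (fun x => ((Splus μ η (K:ℝ) x).card : ℝ)) μ :=
    aux_integrable_card μ _ hSP_meas
  have h_int_cardT : Integrable (fun x => ((T x).card : ℝ)) μ :=
    aux_integrable_card μ _ hT_meas
  -- the pointwise excess function F
  set F : 𝒳 → ℝ := fun x =>
    (∑ k ∈ Splus μ η (K:ℝ) x, (η x k - lam)) - ∑ k ∈ StopK x, (η x k - lam) with hF_def
  have h_int_F : Integrable F μ :=
    (aux_integrable_sum μ _ _ hSP_meas h_int_etal).sub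
      (aux_integrable_sum μ _ StopK hS_meas h_int_etal)
  -- split of F
  have hFsplit : ∀ x, F x = (∑ k ∈ Splus μ η (K:ℝ) x \ StopK x, (η x k - lam))
      + ∑ k ∈ StopK x \ Splus μ η (K:ℝ) x, (lam - η x k) := by
    intro x
    have h1 := Finset.sum_inter_add_sum_sdiff (Splus μ η (K:ℝ) x) (StopK x)
      (fun k => η x k - lam)
    have h2 := Finset.sum_inter_add_sum_sdiff (StopK x) (Splus μ η (K:ℝ) x)
      (fun k => η x k - lam)
    rw [Finset.inter_comm] at h2
    have h3 : ∑ k ∈ StopK x \ Splus μ η (K:ℝ) x, (lam - η x k)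
        = -∑ k ∈ StopK x \ Splus μ η (K:ℝ) x, (η x k - lam) := by
      rw [← Finset.sum_neg_distrib]
      exact Finset.sum_congr rfl fun k _ => by ring
    simp only [hF_def]
    linarith
  have hF_nonneg : ∀ x, 0 ≤ F x := by
    intro x
    rw [hFsplit x]
    refine add_nonneg (Finset.sum_nonneg fun k hk => ?_) (Finset.sum_nonneg fun k hk => ?_)
    · rw [Finset.mem_sdiff] at hk
      exact sub_nonneg.2 ((hSPmem x k).1 hk.1).le
    · rw [Finset.mem_sdiff] at hk
      have := (hSPmem x k).not.1 hk.2
      exact sub_nonneg.2 (not_lt.1 this)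
  -- characterization of F x = 0
  have hFchar : ∀ x, F x = 0 →
      (Splus μ η (K:ℝ) x ⊆ StopK x ∧ ∀ k ∈ StopK x, lam ≤ η x k) := by
    intro x hx
    rw [hFsplit x] at hx
    have hA : 0 ≤ ∑ k ∈ Splus μ η (K:ℝ) x \ StopK x, (η x k - lam) :=
      Finset.sum_nonneg fun k hk => by
        rw [Finset.mem_sdiff] at hk; exact sub_nonneg.2 ((hSPmem x k).1 hk.1).le
    have hBnn : ∀ k ∈ StopK x \ Splus μ η (K:ℝ) x, 0 ≤ lam - η x k := by
      intro k hk
      rw [Finset.mem_sdiff] at hk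
      exact sub_nonneg.2 (not_lt.1 ((hSPmem x k).not.1 hk.2))
    have hB : 0 ≤ ∑ k ∈ StopK x \ Splus μ η (K:ℝ) x, (lam - η x k) :=
      Finset.sum_nonneg hBnn
    have hA0 : ∑ k ∈ Splus μ η (K:ℝ) x \ StopK x, (η x k - lam) = 0 := by linarith
    have hB0 : ∑ k ∈ StopK x \ Splus μ η (K:ℝ) x, (lam - η x k) = 0 := by linarith
    constructor
    · intro k hk
      by_contra hkn
      have hmem : k ∈ Splus μ η (K:ℝ) x \ StopK x := Finset.mem_sdiff.2 ⟨hk, hkn⟩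
      have := (Finset.sum_eq_zero_iff_of_nonneg fun j hj => by
        rw [Finset.mem_sdiff] at hj; exact sub_nonneg.2 ((hSPmem x j).1 hj.1).le).1 hA0 k hmem
      have hlt := (hSPmem x k).1 hk
      linarith
    · intro k hk
      by_cases hkSP : k ∈ Splus μ η (K:ℝ) x
      · exact ((hSPmem x k).1 hkSP).le
      · have hmem : k ∈ StopK x \ Splus μ η (K:ℝ) x := Finset.mem_sdiff.2 ⟨hk, hkSP⟩
        have := (Finset.sum_eq_zero_iff_of_nonneg hBnn).1 hB0 k hmem
        linarith
  have hFzero : ∀ x, Splus μ η (K:ℝ) x ⊆ StopK x → (∀ k ∈ StopK x, lam ≤ η x k) → F x = 0 := by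
    intro x hsub hge
    rw [hFsplit x]
    have h1 : Splus μ η (K:ℝ) x \ StopK x = ∅ := Finset.sdiff_eq_empty_iff_subset.2 hsub
    rw [h1, Finset.sum_empty, zero_add]
    refine Finset.sum_eq_zero fun k hk => ?_
    rw [Finset.mem_sdiff] at hk
    have h2 : η x k ≤ lam := not_lt.1 ((hSPmem x k).not.1 hk.2)
    have h3 : lam ≤ η x k := hge k hk.1
    linarith
  -- Gfun as an integral of counts
  have hG : ∀ l : ℝ, Gfun μ η l = ∫ x, ((univ.filter (fun k => l < η x k)).card : ℝ) ∂μ := by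
    intro l
    rw [aux_integral_card μ _ (hfilt_meas l)]
    unfold Gfun
    refine Finset.sum_congr rfl fun k _ => ?_
    have hset : {x : 𝒳 | k ∈ univ.filter (fun j => l < η x j)} = {x | l < η x k} := by
      ext x; simp
    rw [hset]
  -- sorted-count lemmas (pointwise)
  have hN_le : ∀ (x : 𝒳) (l : ℝ), ηs x ⟨K, hKC⟩ ≤ l →
      (univ.filter (fun k => l < η x k)).card ≤ K := by
    intro x l hl
    obtain ⟨σ, hfg, hsort⟩ := hηs x
    have h := aux_card_gt σ (fun k => hfg k) hsort ⟨K, hKC⟩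
    refine le_trans (Finset.card_le_card ?_) h
    intro k hk
    simp only [mem_filter, mem_univ, true_and] at hk ⊢
    exact lt_of_le_of_lt hl hk
  have hN_ge : ∀ (x : 𝒳) (l : ℝ), l ≤ ηs x ⟨K - 1, by omega⟩ →
      K ≤ (univ.filter (fun k => l ≤ η x k)).card := by
    intro x l hl
    obtain ⟨σ, hfg, hsort⟩ := hηs x
    have h := aux_card_ge σ (fun k => hfg k) hsort ⟨K - 1, by omega⟩
    have hK' : ((⟨K - 1, by omega⟩ : Fin C) : ℕ) + 1 = K := by simp; omega
    rw [hK'] at h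
    refine le_trans h (Finset.card_le_card ?_)
    intro k hk
    simp only [mem_filter, mem_univ, true_and] at hk ⊢
    exact le_trans hl hk
  have hStop_ge : ∀ x, ∀ k ∈ StopK x, ηs x ⟨K - 1, by omega⟩ ≤ η x k := by
    intro x k hk
    by_contra hlt
    push_neg at hlt
    have hB : K ≤ (univ.filter (fun j => ηs x ⟨K - 1, by omega⟩ ≤ η x j)).card :=
      hN_ge x _ (le_refl _)
    have hBsub : (univ.filter (fun j => ηs x ⟨K - 1, by omega⟩ ≤ η x j)) ⊆ (StopK x).erase k := by
      intro j hj
      simp only [mem_filter, mem_univ, true_and] at hj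
      have hjS : j ∈ StopK x := by
        by_contra hjn
        exact absurd (hS_top x k hk j hjn) (not_le.2 (lt_of_lt_of_le hlt hj))
      refine Finset.mem_erase.2 ⟨?_, hjS⟩
      rintro rfl
      exact absurd hj (not_le.2 hlt)
    have hc := Finset.card_le_card hBsub
    rw [Finset.card_erase_of_mem hk, hS_card] at hc
    omega
  -- the integral identity: Δ = ∫ F
  have herr1 : errRate μ η StopK = 1 - ∫ x, ∑ k ∈ StopK x, η x k ∂μ := by
    unfold errRate
    rw [integral_sub (integrable_const 1) h_int_sumS, integral_const]
    simp [measure_univ]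
  have hdisj : ∀ x, Disjoint (Splus μ η (K:ℝ) x) (T x) := by
    intro x
    rw [Finset.disjoint_left]
    intro k hk hkT
    have h1 := (hSPmem x k).1 hk
    have h2 := hT_tie x k hkT
    linarith
  have hpt : ∀ x, (1 - ∑ k ∈ (Splus μ η (K:ℝ) x ∪ T x), η x k)
      = 1 - ((∑ k ∈ Splus μ η (K:ℝ) x, η x k) + lam * ((T x).card : ℝ)) := by
    intro x
    rw [Finset.sum_union (hdisj x)]
    have hT : ∑ k ∈ T x, η x k = lam * ((T x).card : ℝ) := by
      rw [Finset.sum_congr rfl (fun k hk => hT_tie x k hk),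
        Finset.sum_const, nsmul_eq_mul, mul_comm]
    rw [hT]
  have h_int_lamT : Integrable (fun x => lam * ((T x).card : ℝ)) μ :=
    h_int_cardT.const_mul lam
  have h_int_lamSP : Integrable (fun x => lam * ((Splus μ η (K:ℝ) x).card : ℝ)) μ :=
    h_int_cardSP.const_mul lam
  have h_int_SPT : Integrable
      (fun x => (∑ k ∈ Splus μ η (K:ℝ) x, η x k) + lam * ((T x).card : ℝ)) μ :=
    h_int_sumSP.add h_int_lamT
  have herr2 : errRate μ η (fun x => Splus μ η (K:ℝ) x ∪ T x)
      = 1 - ((∫ x, ∑ k ∈ Splus μ η (K:ℝ) x, η x k ∂μ) + lam * avgSize μ T) := by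
    unfold errRate
    rw [show (fun x => (1 - ∑ k ∈ (Splus μ η (K:ℝ) x ∪ T x), η x k))
        = fun x => 1 - ((∑ k ∈ Splus μ η (K:ℝ) x, η x k) + lam * ((T x).card : ℝ))
      from funext hpt]
    rw [integral_sub (integrable_const 1) h_int_SPT,
      integral_const, integral_add h_int_sumSP h_int_lamT,
      integral_const_mul lam _]
    simp [measure_univ, avgSize]
  have hFeq : F = fun x => ((∑ k ∈ Splus μ η (K:ℝ) x, η x k)
      - lam * ((Splus μ η (K:ℝ) x).card : ℝ)) - ((∑ k ∈ StopK x, η x k) - lam * (K : ℝ)) := by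
    funext x
    simp only [hF_def, Finset.sum_sub_distrib, Finset.sum_const, nsmul_eq_mul, hS_card x]
    ring
  have hintF : ∫ x, F x ∂μ = ((∫ x, ∑ k ∈ Splus μ η (K:ℝ) x, η x k ∂μ)
      - lam * avgSize μ (Splus μ η (K:ℝ))) - ((∫ x, ∑ k ∈ StopK x, η x k ∂μ) - lam * (K:ℝ)) := by
    rw [hFeq]
    have hA1 : Integrable (fun x => (∑ k ∈ Splus μ η (K:ℝ) x, η x k)
        - lam * ((Splus μ η (K:ℝ) x).card : ℝ)) μ := h_int_sumSP.sub h_int_lamSP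
    have hA2 : Integrable (fun x => (∑ k ∈ StopK x, η x k) - lam * (K:ℝ)) μ :=
      h_int_sumS.sub (integrable_const _)
    rw [integral_sub hA1 hA2,
      integral_sub h_int_sumSP h_int_lamSP,
      integral_sub h_int_sumS (integrable_const _),
      integral_const_mul lam _, integral_const]
    simp [measure_univ, avgSize]
  have hΔ : errRate μ η StopK - errRate μ η (fun x => Splus μ η (K:ℝ) x ∪ T x)
      = ∫ x, F x ∂μ := by
    rw [herr1, herr2, hintF]
    have := hT_size
    nlinarith [this]
  rw [hΔ, integral_eq_zero_iff_of_nonneg_ae (ae_of_all μ hF_nonneg) h_int_F]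
  constructor
  · -- forward direction
    intro hF0
    refine ⟨lam, ⟨hlam0, hlam1⟩, ?_⟩
    filter_upwards [hF0] with x hx
    obtain ⟨hsub, hge⟩ := hFchar x hx
    constructor
    · by_contra h
      push_neg at h
      obtain ⟨σ, hfg, hsort⟩ := hηs x
      have h1 := aux_card_ge σ (fun k => hfg k) hsort ⟨K, hKC⟩
      have h2 : (univ.filter fun k => ηs x ⟨K, hKC⟩ ≤ η x k) ⊆ StopK x := by
        intro k hk
        simp only [mem_filter, mem_univ, true_and] at hk
        exact hsub ((hSPmem x k).2 (lt_of_lt_of_le h hk))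
      have h3 := Finset.card_le_card h2
      rw [hS_card] at h3
      simp only [Fin.val_mk] at h1
      omega
    · by_contra h
      push_neg at h
      obtain ⟨σ, hfg, hsort⟩ := hηs x
      have h1 := aux_card_gt σ (fun k => hfg k) hsort ⟨K - 1, by omega⟩
      have h2 : StopK x ⊆ univ.filter fun k => ηs x ⟨K - 1, by omega⟩ < η x k := by
        intro k hk
        simp only [mem_filter, mem_univ, true_and]
        exact lt_of_lt_of_le h (hge k hk)
      have h3 := Finset.card_le_card h2
      rw [hS_card] at h3
      simp only [Fin.val_mk] at h1
      omega
  · -- backward direction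
    rintro ⟨l, ⟨hl0, hl1⟩, hae⟩
    have hNl_int : ∀ l' : ℝ,
        Integrable (fun x => (((univ.filter (fun k => l' < η x k)).card : ℕ) : ℝ)) μ :=
      fun l' => aux_integrable_card μ _ (hfilt_meas l')
    have hGlK : Gfun μ η l ≤ (K : ℝ) := by
      rw [hG l]
      calc ∫ x, (((univ.filter (fun k => l < η x k)).card : ℕ) : ℝ) ∂μ
          ≤ ∫ _, (K : ℝ) ∂μ := by
            refine integral_mono_ae (hNl_int l) (integrable_const _) ?_
            filter_upwards [hae] with x hx
            exact_mod_cast hN_le x l hx.1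
        _ = (K : ℝ) := by simp [measure_univ]
    have hlam_le_l : lam ≤ l := csInf_le hbdd ⟨⟨hl0, hl1⟩, hGlK⟩
    have hGlamK : Gfun μ η lam ≤ (K : ℝ) := by
      have hTnn : 0 ≤ avgSize μ T := integral_nonneg fun x => by positivity
      have havSP : avgSize μ (Splus μ η (K:ℝ)) = Gfun μ η lam := by
        rw [hG lam]
        rfl
      rw [← havSP]
      linarith [hT_size]
    rcases eq_or_lt_of_le hlam_le_l with heq | hlt
    · filter_upwards [hae] with x hx
      obtain ⟨h1, h2⟩ := hx
      refine hFzero x ?_ ?_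
      · intro k hk
        by_contra hkn
        have hins : insert k (StopK x) ⊆ univ.filter (fun j => lam < η x j) := by
          intro j hj
          rcases Finset.mem_insert.1 hj with rfl | hjS
          · simp only [mem_filter, mem_univ, true_and]
            exact (hSPmem x j).1 hk
          · simp only [mem_filter, mem_univ, true_and]
            exact lt_of_lt_of_le ((hSPmem x k).1 hk) (hS_top x j hjS k hkn)
        have hc := Finset.card_le_card hins
        rw [Finset.card_insert_of_notMem hkn, hS_card] at hc
        have hNle := hN_le x lam (heq ▸ h1)
        omega
      · intro k hk
        calc lam = l := heq
          _ ≤ ηs x ⟨K - 1, by omega⟩ := h2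
          _ ≤ η x k := hStop_ge x k hk
    · -- lam < l : squeeze the count at lam
      have hNlam_ge : ∀ᵐ x ∂μ,
          (K : ℝ) ≤ (((univ.filter (fun k => lam < η x k)).card : ℕ) : ℝ) := by
        filter_upwards [hae] with x hx
        have hsub : (univ.filter (fun k => l ≤ η x k)) ⊆ (univ.filter (fun k => lam < η x k)) := by
          intro k hk
          simp only [mem_filter, mem_univ, true_and] at hk ⊢
          exact lt_of_lt_of_le hlt hk
        have := le_trans (hN_ge x l hx.2) (Finset.card_le_card hsub)
        exact_mod_cast this
      have hintN := hNl_int lam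
      have hNle : ∫ x, (((univ.filter (fun k => lam < η x k)).card : ℕ) : ℝ) ∂μ ≤ (K:ℝ) := by
        rw [← hG lam]; exact hGlamK
      have hdiff_nonneg : 0 ≤ᵐ[μ] fun x =>
          (((univ.filter (fun k => lam < η x k)).card : ℕ) : ℝ) - (K:ℝ) := by
        filter_upwards [hNlam_ge] with x hx
        simp only [Pi.zero_apply]
        linarith
      have hdiff_int : Integrable (fun x =>
          (((univ.filter (fun k => lam < η x k)).card : ℕ) : ℝ) - (K:ℝ)) μ :=
        hintN.sub (integrable_const _)
      have hdiff0 : ∫ x, ((((univ.filter (fun k => lam < η x k)).card : ℕ) : ℝ) - (K:ℝ)) ∂μ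
          = 0 := by
        have hge0 : 0 ≤ ∫ x, ((((univ.filter (fun k => lam < η x k)).card : ℕ) : ℝ) - (K:ℝ)) ∂μ :=
          integral_nonneg_of_ae hdiff_nonneg
        have hsub := integral_sub hintN (integrable_const (K:ℝ))
        have hconst : ∫ (_ : 𝒳), (K:ℝ) ∂μ = (K:ℝ) := by simp [measure_univ]
        rw [hsub, hconst] at hge0 ⊢
        linarith
      have hNK : ∀ᵐ x ∂μ,
          ((((univ.filter (fun k => lam < η x k)).card : ℕ) : ℝ) - (K:ℝ)) = 0 :=
        (integral_eq_zero_iff_of_nonneg_ae hdiff_nonneg hdiff_int).1 hdiff0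
      filter_upwards [hae, hNK] with x hx hNx
      obtain ⟨h1, h2⟩ := hx
      have hcard : (univ.filter (fun k => lam < η x k)).card = K := by
        have : (((univ.filter (fun k => lam < η x k)).card : ℕ) : ℝ) = (K:ℝ) := by linarith
        exact_mod_cast this
      refine hFzero x ?_ ?_
      · intro k hk
        by_contra hkn
        have hins : insert k (StopK x) ⊆ univ.filter (fun j => lam < η x j) := by
          intro j hj
          rcases Finset.mem_insert.1 hj with rfl | hjS
          · simp only [mem_filter, mem_univ, true_and]
            exact (hSPmem x j).1 hk
          · simp only [mem_filter, mem_univ, true_and]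
            exact lt_of_lt_of_le ((hSPmem x k).1 hk) (hS_top x j hjS k hkn)
        have hc := Finset.card_le_card hins
        rw [Finset.card_insert_of_notMem hkn, hS_card, hcard] at hc
        omega
      · intro k hk
        calc lam ≤ l := hlam_le_l
          _ ≤ ηs x ⟨K - 1, by omega⟩ := h2
          _ ≤ η x k := hStop_ge x k hk
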